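/- Under the communication setup and the backward controller recursion with horizon M, suppose additionally that the Q_k, R_{k,i} are symmetric positive definite and, for every k ∈ {0,…,M−1} and i, assume the boundedness assumption (so all recursion matrices are well defined and positive definite). Then for every k ∈ {0,…,M−1} and every agent i, the smallest eigenvalue of P_{k+1,i} satisfies λ_min(P_{k+1,i}) ≥ (n_m/κ_{Q,1} + n_m N κ_B^2/κ_{R,1})^{-1}, where n_m = max_{i,j} ω_ij; equivalently P_{k+1,i}^{-1} ≤ (n_m/κ_{Q,1} + n_m N κ_B^2/κ_{R,1}) I_n. -/

import Mathlib

/-!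
Backward induction keeps `P̆_{k,i} ≥ N κ_{Q,1} I`: at the terminal time `P̆ = N Q`, and
`P̆_{k,i} = Aᵀ P_{k+1,i} A + N Q_k` with `P_{k+1,i}` positive definite. Given that bound,
`P̄⁻¹ = P̆⁻¹ + B R⁻¹ Bᵀ ≤ (1/(N κ_{Q,1}) + κ_B²/κ_{R,1}) I`, and the fused information
`P⁻¹ = ∑_{j ∈ 𝒩_i} ω_ij P̄_j⁻¹` has at most `N` terms with weights at most `n_m`.
-/

open Matrix Finset

/-- For symmetric matrices, `loewnerLE X Y` means `X ≤ Y` in the Loewner order. -/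
def loewnerLE {p : ℕ} (X Y : Matrix (Fin p) (Fin p) ℝ) : Prop := (Y - X).PosSemidef

open scoped MatrixOrder Matrix.Norms.L2Operator

namespace Matrix

section LoewnerOrder

variable {ι : Type*}

lemma posDef_of_smul_one_le [DecidableEq ι] {A : Matrix ι ι ℝ} {c : ℝ} (hc : 0 < c)
    (h : c • 1 ≤ A) : A.PosDef := by
  simpa using PosDef.posSemidef_add (le_iff.mp h) (PosDef.one.smul hc)

variable [Fintype ι]

lemma PosDef.inv_inv [DecidableEq ι] {A : Matrix ι ι ℝ} (hA : A.PosDef) : A⁻¹⁻¹ = A :=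
  nonsing_inv_nonsing_inv A ((isUnit_iff_isUnit_det A).mp hA.isUnit)

lemma dotProduct_mulVec_le_of_le {X Y : Matrix ι ι ℝ} (h : X ≤ Y) (x : ι → ℝ) :
    x ⬝ᵥ X *ᵥ x ≤ x ⬝ᵥ Y *ᵥ x := by
  have := (le_iff.mp h).dotProduct_mulVec_nonneg x
  rwa [star_trivial, sub_mulVec, dotProduct_sub, sub_nonneg] at this

lemma le_of_dotProduct_mulVec_le {X Y : Matrix ι ι ℝ} (hX : X.IsHermitian) (hY : Y.IsHermitian)
    (h : ∀ x, x ⬝ᵥ X *ᵥ x ≤ x ⬝ᵥ Y *ᵥ x) : X ≤ Y :=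
  PosSemidef.of_dotProduct_mulVec_nonneg (hY.sub hX) fun x => by
    rw [star_trivial, sub_mulVec, dotProduct_sub, sub_nonneg]
    exact h x

lemma mul_mul_transpose_le_mul_mul_transpose {m : Type*} [Fintype m] {X Y : Matrix ι ι ℝ}
    (h : X ≤ Y) (B : Matrix m ι ℝ) : B * X * Bᵀ ≤ B * Y * Bᵀ := by
  rw [le_iff, ← Matrix.sub_mul, ← Matrix.mul_sub, ← conjTranspose_eq_transpose_of_trivial]
  exact (le_iff.mp h).mul_mul_conjTranspose_same B

lemma transpose_mul_mul_nonneg {m : Type*} [Fintype m] {P : Matrix ι ι ℝ} (hP : P.PosSemidef)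
    (A : Matrix ι m ℝ) : 0 ≤ Aᵀ * P * A := by
  simpa using (hP.conjTranspose_mul_mul_same A).nonneg

lemma dotProduct_self_eq_norm_sq (v : ι → ℝ) : v ⬝ᵥ v = ‖WithLp.toLp 2 v‖ ^ 2 := by
  rw [← real_inner_self_eq_norm_sq, EuclideanSpace.inner_eq_star_dotProduct, star_trivial]

variable [DecidableEq ι]

lemma dotProduct_smul_one_mulVec (c : ℝ) (x : ι → ℝ) :
    x ⬝ᵥ (c • (1 : Matrix ι ι ℝ)) *ᵥ x = c * (x ⬝ᵥ x) := by
  rw [smul_mulVec, one_mulVec, dotProduct_smul, smul_eq_mul]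

lemma inv_le_smul_one_of_smul_one_le {A : Matrix ι ι ℝ} {c : ℝ} (hc : 0 < c)
    (h : c • 1 ≤ A) : A⁻¹ ≤ c⁻¹ • 1 := by
  have hA := posDef_of_smul_one_le hc h
  refine le_of_dotProduct_mulVec_le hA.inv.isHermitian (isHermitian_one.smul (.all _)) fun x => ?_
  set y := A⁻¹ *ᵥ x
  have hAy : A *ᵥ y = x := by
    rw [mulVec_mulVec, mul_nonsing_inv _ ((isUnit_iff_isUnit_det A).mp hA.isUnit), one_mulVec]
  -- `c ‖y‖² ≤ ⟪y, A y⟫ = ⟪x, y⟫`, and expanding `0 ≤ ‖x - c y‖²` gives `c ⟪x, y⟫ ≤ ‖x‖²`.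
  have hlow : c * (y ⬝ᵥ y) ≤ x ⬝ᵥ y := by
    simpa [dotProduct_smul_one_mulVec, hAy, dotProduct_comm y x] using
      dotProduct_mulVec_le_of_le h y
  have hsq : 0 ≤ (x - c • y) ⬝ᵥ (x - c • y) := by
    simpa using dotProduct_star_self_nonneg (x - c • y)
  rw [dotProduct_smul_one_mulVec, inv_mul_eq_div, le_div_iff₀ hc]
  simp only [sub_dotProduct, dotProduct_sub, smul_dotProduct, dotProduct_smul, smul_eq_mul,
    dotProduct_comm y x] at hsq
  nlinarith

lemma mul_transpose_self_le {m : Type*} [Fintype m] [DecidableEq m] {B : Matrix m ι ℝ} {κ : ℝ}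
    (hB : ‖B‖ ≤ κ) : B * Bᵀ ≤ κ ^ 2 • 1 := by
  refine le_of_dotProduct_mulVec_le ?_ (isHermitian_one.smul (.all _)) fun x => ?_
  · simpa using isHermitian_mul_conjTranspose_self B
  have hBt : ‖WithLp.toLp 2 (Bᵀ *ᵥ x)‖ ≤ κ * ‖WithLp.toLp 2 x‖ := by
    have := l2_opNorm_mulVec Bᵀ (WithLp.toLp 2 x)
    rw [← conjTranspose_eq_transpose_of_trivial, l2_opNorm_conjTranspose] at this
    exact this.trans (by gcongr)
  rw [← mulVec_mulVec, dotProduct_mulVec, ← mulVec_transpose, dotProduct_smul_one_mulVec,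
    dotProduct_self_eq_norm_sq, dotProduct_self_eq_norm_sq, ← mul_pow]
  gcongr

lemma posDef_inv_add_mul_inv_mul_transpose {m : Type*} [Fintype m] [DecidableEq m]
    {P : Matrix ι ι ℝ} {R : Matrix m m ℝ} (hP : P.PosDef) (hR : R.PosSemidef) (B : Matrix ι m ℝ) :
    (P⁻¹ + B * R⁻¹ * Bᵀ).PosDef :=
  hP.inv.add_posSemidef (by simpa using hR.inv.mul_mul_conjTranspose_same B)

lemma sum_smul_le_smul_one {α : Type*} (s : Finset α) {ω : α → ℝ} {Y : α → Matrix ι ι ℝ}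
    {b : ℝ} (hω : ∀ j ∈ s, 0 ≤ ω j) (hY : ∀ j ∈ s, Y j ≤ b • 1) :
    ∑ j ∈ s, ω j • Y j ≤ (∑ j ∈ s, ω j * b) • 1 := by
  rw [Finset.sum_smul]
  refine sum_le_sum fun j hj => ?_
  rw [mul_smul]
  exact smul_le_smul_of_nonneg_left (hY j hj) (hω j hj)

end LoewnerOrder

end Matrix

section Recursion

variable {ι μ α : Type*} [Fintype ι] [DecidableEq ι] [Fintype μ] [DecidableEq μ]

/-- `P̄_{k+1,i}` of the recursion. -/
noncomputable def localUpdate (P : Matrix ι ι ℝ) (B : Matrix ι μ ℝ) (R : Matrix μ μ ℝ) :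
    Matrix ι ι ℝ :=
  (P⁻¹ + B * R⁻¹ * Bᵀ)⁻¹

/-- `P_{k+1,i}` of the recursion. -/
noncomputable def fusion (s : Finset α) (ω : α → ℝ) (P : α → Matrix ι ι ℝ) : Matrix ι ι ℝ :=
  (∑ j ∈ s, ω j • (P j)⁻¹)⁻¹

lemma inv_localUpdate {P : Matrix ι ι ℝ} {R : Matrix μ μ ℝ} (hP : P.PosDef) (hR : R.PosSemidef)
    (B : Matrix ι μ ℝ) : (localUpdate P B R)⁻¹ = P⁻¹ + B * R⁻¹ * Bᵀ :=
  (posDef_inv_add_mul_inv_mul_transpose hP hR B).inv_inv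

lemma posDef_localUpdate {P : Matrix ι ι ℝ} {R : Matrix μ μ ℝ} (hP : P.PosDef)
    (hR : R.PosSemidef) (B : Matrix ι μ ℝ) : (localUpdate P B R).PosDef :=
  (posDef_inv_add_mul_inv_mul_transpose hP hR B).inv

lemma inv_localUpdate_le {P : Matrix ι ι ℝ} {R : Matrix μ μ ℝ} {B : Matrix ι μ ℝ}
    {c r κ : ℝ} (hc : 0 < c) (hP : c • 1 ≤ P) (hr : 0 < r) (hR : r • 1 ≤ R) (hB : ‖B‖ ≤ κ) :
    (localUpdate P B R)⁻¹ ≤ (c⁻¹ + κ ^ 2 / r) • 1 := by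
  rw [inv_localUpdate (posDef_of_smul_one_le hc hP) (posDef_of_smul_one_le hr hR).posSemidef]
  calc P⁻¹ + B * R⁻¹ * Bᵀ ≤ c⁻¹ • 1 + B * (r⁻¹ • 1) * Bᵀ :=
        add_le_add (inv_le_smul_one_of_smul_one_le hc hP)
          (mul_mul_transpose_le_mul_mul_transpose (inv_le_smul_one_of_smul_one_le hr hR) B)
    _ = c⁻¹ • 1 + r⁻¹ • (B * Bᵀ) := by simp
    _ ≤ c⁻¹ • 1 + r⁻¹ • (κ ^ 2 • 1) := by gcongr; exact mul_transpose_self_le hB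
    _ = (c⁻¹ + κ ^ 2 / r) • 1 := by rw [smul_smul, ← add_smul, div_eq_inv_mul]

lemma posDef_sum_smul_inv {s : Finset α} (hs : s.Nonempty) {ω : α → ℝ} (hω : ∀ j ∈ s, 0 < ω j)
    {P : α → Matrix ι ι ℝ} (hP : ∀ j ∈ s, (P j).PosDef) : (∑ j ∈ s, ω j • (P j)⁻¹).PosDef :=
  posDef_sum hs fun j hj => (hP j hj).inv.smul (hω j hj)

lemma posDef_fusion {s : Finset α} (hs : s.Nonempty) {ω : α → ℝ} (hω : ∀ j ∈ s, 0 < ω j)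
    {P : α → Matrix ι ι ℝ} (hP : ∀ j ∈ s, (P j).PosDef) : (fusion s ω P).PosDef :=
  (posDef_sum_smul_inv hs hω hP).inv

lemma inv_fusion_le {s : Finset α} (hs : s.Nonempty) {ω : α → ℝ} {w : ℝ}
    (hω : ∀ j ∈ s, 0 < ω j ∧ ω j ≤ w) {P : α → Matrix ι ι ℝ} (hP : ∀ j ∈ s, (P j).PosDef)
    {b : ℝ} (hb : 0 ≤ b) (hPb : ∀ j ∈ s, (P j)⁻¹ ≤ b • 1) :
    (fusion s ω P)⁻¹ ≤ (#s * w * b) • 1 := by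
  rw [fusion, (posDef_sum_smul_inv hs (fun j hj => (hω j hj).1) hP).inv_inv]
  refine (sum_smul_le_smul_one s (fun j hj => (hω j hj).1.le) hPb).trans
    (smul_le_smul_of_nonneg_right ?_ zero_le_one)
  calc ∑ j ∈ s, ω j * b ≤ ∑ j ∈ s, w * b :=
        sum_le_sum fun j hj => mul_le_mul_of_nonneg_right (hω j hj).2 hb
    _ = #s * w * b := by rw [sum_const, nsmul_eq_mul, mul_assoc]

lemma fusion_localUpdate_bounds [Fintype α] {ν : α → Type*} [∀ j, Fintype (ν j)]
    [∀ j, DecidableEq (ν j)] {nbr : α → Finset α} (hself : ∀ i, i ∈ nbr i) {ω : α → α → ℝ}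
    {w : ℝ} (hω : ∀ i, ∀ j ∈ nbr i, 0 < ω i j ∧ ω i j ≤ w) {P : α → Matrix ι ι ℝ}
    {B : ∀ j, Matrix ι (ν j) ℝ} {R : ∀ j, Matrix (ν j) (ν j) ℝ} {c r κ : ℝ} (hc : 0 < c)
    (hP : ∀ j, c • 1 ≤ P j) (hr : 0 < r) (hR : ∀ j, r • 1 ≤ R j) (hB : ∀ j, ‖B j‖ ≤ κ)
    (i : α) :
    (fusion (nbr i) (ω i) fun j => localUpdate (P j) (B j) (R j)).PosDef ∧
      (fusion (nbr i) (ω i) fun j => localUpdate (P j) (B j) (R j))⁻¹ ≤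
        (Fintype.card α * w * (c⁻¹ + κ ^ 2 / r)) • 1 := by
  have hs : (nbr i).Nonempty := ⟨i, hself i⟩
  have hPbar j : (localUpdate (P j) (B j) (R j)).PosDef :=
    posDef_localUpdate (posDef_of_smul_one_le hc (hP j))
      (posDef_of_smul_one_le hr (hR j)).posSemidef (B j)
  have hw : 0 ≤ w := (hω i i (hself i)).1.le.trans (hω i i (hself i)).2
  refine ⟨posDef_fusion hs (fun j hj => (hω i j hj).1) fun j _ => hPbar j, ?_⟩
  refine (inv_fusion_le hs (hω i) (fun j _ => hPbar j) (by positivity)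
    fun j _ => inv_localUpdate_le hc (hP j) hr (hR j) (hB j)).trans ?_
  gcongr
  exact card_le_univ _

end Recursion

theorem fusion_matrix_uniform_lower_bound_general {n N : ℕ} (m : Fin N → ℕ)
    (nbr : Fin N → Finset (Fin N)) (hself : ∀ i, i ∈ nbr i)
    (ω : Fin N → Fin N → ℝ)
    (hω : ∀ i, ∀ j ∈ nbr i, 0 < ω i j ∧
      ω i j ≤ 1 / ((Finset.univ.filter (fun l => j ∈ nbr l)).card : ℝ))
    (M : ℕ)
    (A : ℕ → Matrix (Fin n) (Fin n) ℝ)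
    (B : ∀ _ : ℕ, ∀ i : Fin N, Matrix (Fin n) (Fin (m i)) ℝ)
    (Q : ℕ → Matrix (Fin n) (Fin n) ℝ)
    (R : ∀ _ : ℕ, ∀ i : Fin N, Matrix (Fin (m i)) (Fin (m i)) ℝ)
    (κB κQ1 κR1 : ℝ) (hκQ1 : 0 < κQ1) (hκR1 : 0 < κR1)
    (hB : ∀ k i, ‖LinearMap.toContinuousLinearMap (Matrix.toEuclideanLin (B k i))‖ ≤ κB)
    (hQlb : ∀ k, loewnerLE (κQ1 • (1 : Matrix (Fin n) (Fin n) ℝ)) (Q k))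
    (hRlb : ∀ k i, loewnerLE (κR1 • (1 : Matrix (Fin (m i)) (Fin (m i)) ℝ)) (R k i))
    (Pbar Pm Pbrv : ℕ → Fin N → Matrix (Fin n) (Fin n) ℝ)
    (hPbrvM : ∀ i, Pbrv M i = (N : ℝ) • Q M)
    (hPbar : ∀ k < M, ∀ i,
      Pbar (k+1) i = ((Pbrv (k+1) i)⁻¹ + B k i * (R k i)⁻¹ * (B k i)ᵀ)⁻¹)
    (hPm : ∀ k < M, ∀ i, Pm (k+1) i = (∑ j ∈ nbr i, ω i j • (Pbar (k+1) j)⁻¹)⁻¹)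
    (hPbrv : ∀ k < M, ∀ i, Pbrv k i = (A k)ᵀ * Pm (k+1) i * A k + (N : ℝ) • Q k) :
    ∀ k < M, ∀ i, loewnerLE ((Pm (k+1) i)⁻¹)
      (((⨆ p : Fin N × Fin N, ω p.1 p.2) / κQ1 +
        (⨆ p : Fin N × Fin N, ω p.1 p.2) * N * κB ^ 2 / κR1) •
        (1 : Matrix (Fin n) (Fin n) ℝ)) := by
  set nm := ⨆ p : Fin N × Fin N, ω p.1 p.2
  have hω_le : ∀ i j, ω i j ≤ nm := fun i j =>
    le_ciSup (f := fun p : Fin N × Fin N => ω p.1 p.2) (Set.finite_range _).bddAbove (i, j)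
  set c0 := ((N : ℝ) * κQ1)⁻¹ + κB ^ 2 / κR1
  have hPm_bound : ∀ k < M, (∀ j, ((N : ℝ) * κQ1) • 1 ≤ Pbrv (k + 1) j) → ∀ i,
      (Pm (k + 1) i).PosDef ∧ (Pm (k + 1) i)⁻¹ ≤ (N * nm * c0) • 1 := by
    intro k hk hlow i
    have hPm_eq : Pm (k + 1) i =
        fusion (nbr i) (ω i) fun j => localUpdate (Pbrv (k + 1) j) (B k j) (R k j) := by
      simp_rw [hPm k hk i, hPbar k hk]
      rfl
    have hNQ : 0 < (N : ℝ) * κQ1 := mul_pos (by exact_mod_cast i.pos) hκQ1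
    rw [hPm_eq]
    simpa only [Fintype.card_fin] using fusion_localUpdate_bounds hself
      (fun i j hj => ⟨(hω i j hj).1, hω_le i j⟩) hNQ hlow hκR1 (hRlb k) (hB k) i
  have hPbrv_lower : ∀ k ≤ M, ∀ i, ((N : ℝ) * κQ1) • 1 ≤ Pbrv k i := by
    intro k hk
    induction hk using Nat.decreasingInduction with
    | self =>
      intro i
      rw [hPbrvM i, mul_smul]
      exact smul_le_smul_of_nonneg_left (hQlb M) N.cast_nonneg
    | of_succ k hk ih =>
      intro i
      rw [hPbrv k hk i, mul_smul]
      exact le_add_of_nonneg_of_le (transpose_mul_mul_nonneg (hPm_bound k hk ih i).1.posSemidef (A k))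
        (smul_le_smul_of_nonneg_left (hQlb k) N.cast_nonneg)
  intro k hk i
  have hN : (N : ℝ) ≠ 0 := by exact_mod_cast i.pos.ne'
  have hcf : nm / κQ1 + nm * N * κB ^ 2 / κR1 = N * nm * c0 := by
    simp only [c0]
    field_simp
  rw [hcf]
  exact (hPm_bound k hk (hPbrv_lower (k + 1) hk) i).2

/-- First half of the proof of Theorem 1 of the paper: under the communication setup,
the backward controller recursion with horizon `M` and the (partial) boundedness
assumption, the fusion matrices `P_{k+1,i}` satisfy the uniform lower bound
`P_{k+1,i}⁻¹ ≤ (n_m/κ_{Q,1} + n_m N κ_B²/κ_{R,1}) I_n`, where `n_m = max_{i,j} ω_{ij}`. -/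
theorem fusion_matrix_uniform_lower_bound {n N : ℕ} (hN : 0 < N) (m : Fin N → ℕ)
    (nbr : Fin N → Finset (Fin N)) (hself : ∀ i, i ∈ nbr i)
    (ω : Fin N → Fin N → ℝ)
    (hω : ∀ i, ∀ j ∈ nbr i, 0 < ω i j ∧
      ω i j ≤ 1 / ((Finset.univ.filter (fun l => j ∈ nbr l)).card : ℝ))
    (M : ℕ)
    (A : ℕ → Matrix (Fin n) (Fin n) ℝ)
    (B : ∀ _ : ℕ, ∀ i : Fin N, Matrix (Fin n) (Fin (m i)) ℝ)
    (Q : ℕ → Matrix (Fin n) (Fin n) ℝ) (hQ : ∀ k, (Q k).PosDef)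
    (R : ∀ _ : ℕ, ∀ i : Fin N, Matrix (Fin (m i)) (Fin (m i)) ℝ)
    (hR : ∀ k i, (R k i).PosDef)
    (κB κQ1 κR1 : ℝ) (hκB : 0 < κB) (hκQ1 : 0 < κQ1) (hκR1 : 0 < κR1)
    (hB : ∀ k i, ‖LinearMap.toContinuousLinearMap (Matrix.toEuclideanLin (B k i))‖ ≤ κB)
    (hQlb : ∀ k, loewnerLE (κQ1 • (1 : Matrix (Fin n) (Fin n) ℝ)) (Q k))
    (hRlb : ∀ k i, loewnerLE (κR1 • (1 : Matrix (Fin (m i)) (Fin (m i)) ℝ)) (R k i))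
    (Pbar Pm Pbrv : ℕ → Fin N → Matrix (Fin n) (Fin n) ℝ)
    (hPbrvM : ∀ i, Pbrv M i = (N : ℝ) • Q M)
    (hPbar : ∀ k < M, ∀ i,
      Pbar (k+1) i = ((Pbrv (k+1) i)⁻¹ + B k i * (R k i)⁻¹ * (B k i)ᵀ)⁻¹)
    (hPm : ∀ k < M, ∀ i, Pm (k+1) i = (∑ j ∈ nbr i, ω i j • (Pbar (k+1) j)⁻¹)⁻¹)
    (hPbrv : ∀ k < M, ∀ i, Pbrv k i = (A k)ᵀ * Pm (k+1) i * A k + (N : ℝ) • Q k) :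
    ∀ k < M, ∀ i, loewnerLE ((Pm (k+1) i)⁻¹)
      (((⨆ p : Fin N × Fin N, ω p.1 p.2) / κQ1 +
        (⨆ p : Fin N × Fin N, ω p.1 p.2) * N * κB ^ 2 / κR1) •
        (1 : Matrix (Fin n) (Fin n) ℝ)) :=
  fusion_matrix_uniform_lower_bound_general m nbr hself ω hω M A B Q R κB κQ1 κR1 hκQ1 hκR1 hB hQlb
    hRlb Pbar Pm Pbrv hPbrvM hPbar hPm hPbrv
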